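/- (Theorem 3) Let n ≥ 2 and let A₁|A₂ be a bipartition of {1,…,n} into two nonempty complementary subsets with |A₁| = n_{A₁} and |A₂| = n_{A₂}. Let ρ be a pure density matrix on (ℂ^d)^{⊗n} that is separable under A₁|A₂, i.e. ρ = ρ_{A₁} ⊗ ρ_{A₂} (up to the corresponding permutation of tensor factors) for density matrices ρ_{A₁} on (ℂ^d)^{⊗n_{A₁}} and ρ_{A₂} on (ℂ^d)^{⊗n_{A₂}}. Then for every k = 1,…,d²−1, ‖T_{A₁|A₂}‖_k ≤ √(2ⁿ(d^{n_{A₁}}−1)(d^{n_{A₂}}−1)/dⁿ). -/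

import Mathlib

open Matrix ComplexOrder

/-- The singular values of a real matrix `M`: square roots of eigenvalues of `Mᴴ * M`. -/
noncomputable def singVals {α β : Type*} [Fintype α] [Fintype β] [DecidableEq β]
    (M : Matrix α β ℝ) : β → ℝ :=
  fun i => Real.sqrt ((Matrix.isHermitian_conjTranspose_mul_self M).eigenvalues i)

/-- The Ky Fan `k`-norm of a real matrix: the sum of its `k` largest singular values
(realized as the largest sum of singular values over index sets of size at most `k`). -/
noncomputable def kyFan {α β : Type*} [Fintype α] [Fintype β] [DecidableEq β]
    (k : ℕ) (M : Matrix α β ℝ) : ℝ :=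
  (Finset.univ.powerset.filter (fun s : Finset β => s.card ≤ k)).sup'
    ⟨∅, by simp⟩ (fun s => ∑ i ∈ s, singVals M i)

/-- Separability of an `n`-partite state (indexed by `Fin n → Fin d`) under the
bipartition `A | Aᶜ`: `ρ` is, up to the permutation of tensor factors, the tensor
product of a density matrix on the factors in `A` and one on the factors not in `A`. -/
def SepUnder {n d : ℕ} (ρ : Matrix (Fin n → Fin d) (Fin n → Fin d) ℂ)
    (A : Finset (Fin n)) : Prop :=
  ∃ (ρA : Matrix ({j // j ∈ A} → Fin d) ({j // j ∈ A} → Fin d) ℂ)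
    (ρB : Matrix ({j // j ∉ A} → Fin d) ({j // j ∉ A} → Fin d) ℂ),
    ρA.PosSemidef ∧ ρA.trace = 1 ∧ ρB.PosSemidef ∧ ρB.trace = 1 ∧
    ∀ v w, ρ v w = ρA (fun j => v j.1) (fun j => w j.1) * ρB (fun j => v j.1) (fun j => w j.1)

/-- The full `n`-body correlation tensor entry `t_{a 0, …, a (n-1)}` of `ρ`,
i.e. `tr (ρ · (λ_{a 0} ⊗ ⋯ ⊗ λ_{a (n-1)}))`. -/
noncomputable def corrFull {n d : ℕ} (lam : Fin (d ^ 2 - 1) → Matrix (Fin d) (Fin d) ℂ)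
    (ρ : Matrix (Fin n → Fin d) (Fin n → Fin d) ℂ) (a : Fin n → Fin (d ^ 2 - 1)) : ℝ :=
  (Matrix.trace (ρ * Matrix.of (fun v w : Fin n → Fin d => ∏ j, lam (a j) (v j) (w j)))).re

/-!
For a product state `ρ = ρ_{A₁} ⊗ ρ_{A₂}` every entry of `T_{A₁|A₂}` factors as `u r * v c`, with
`u` and `v` the correlation tensors of the two marginals, so `T_{A₁|A₂}` has rank at most one and
all its Ky Fan norms are bounded by its Frobenius norm `‖u‖ ‖v‖`. On `m` sites the operators
`λ_{a 1} ⊗ ⋯ ⊗ λ_{a m}` together with the identity are orthogonal for the Hilbert–Schmidt inner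
product, with squared norms `2ᵐ` and `dᵐ`; Bessel's inequality for a state `σ`, for which
`tr σ² ≤ (tr σ)² = 1`, then gives `‖u‖² ≤ 2ᵐ (dᵐ - 1) / dᵐ`.
-/

section KyFan

variable {α β : Type*} [Fintype α] [Fintype β] [DecidableEq β]

lemma sum_singVals_le_sqrt_rank_mul (M : Matrix α β ℝ) (S : Finset β) :
    ∑ i ∈ S, singVals M i ≤ √M.rank * √(Mᴴ * M).trace := by
  set e := (isHermitian_conjTranspose_mul_self M).eigenvalues
  have he : ∀ i, 0 ≤ e i := eigenvalues_conjTranspose_mul_self_nonneg M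
  calc ∑ i ∈ S, singVals M i = ∑ i ∈ S, √(if e i ≠ 0 then 1 else 0) * √(e i) := by
        refine Finset.sum_congr rfl fun i _ => ?_
        change √(e i) = _
        by_cases h : e i = 0 <;> simp [h]
    _ ≤ √(∑ i ∈ S, if e i ≠ 0 then 1 else 0) * √(∑ i ∈ S, e i) :=
        Real.sum_sqrt_mul_sqrt_le S (fun i => by positivity) he
    _ ≤ √M.rank * √(Mᴴ * M).trace := by
        gcongr
        · calc ∑ i ∈ S, (if e i ≠ 0 then (1 : ℝ) else 0)
              ≤ ∑ i, if e i ≠ 0 then (1 : ℝ) else 0 :=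
                Finset.sum_le_sum_of_subset_of_nonneg S.subset_univ fun i _ _ => by positivity
            _ = M.rank := by
                rw [Finset.sum_boole, ← rank_conjTranspose_mul_self,
                  (isHermitian_conjTranspose_mul_self M).rank_eq_card_non_zero_eigs,
                  Fintype.card_subtype]
        · rw [(isHermitian_conjTranspose_mul_self M).trace_eq_sum_eigenvalues]
          exact Finset.sum_le_sum_of_subset_of_nonneg S.subset_univ fun i _ _ => he i

lemma kyFan_le_sqrt_rank_mul (k : ℕ) (M : Matrix α β ℝ) :
    kyFan k M ≤ √M.rank * √(Mᴴ * M).trace :=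
  Finset.sup'_le _ _ fun S _ => sum_singVals_le_sqrt_rank_mul M S

lemma kyFan_vecMulVec_le (k : ℕ) (u : α → ℝ) (v : β → ℝ) :
    kyFan k (vecMulVec u v) ≤ √(∑ r, u r ^ 2) * √(∑ c, v c ^ 2) := by
  have htr : ((vecMulVec u v)ᴴ * vecMulVec u v).trace = (∑ r, u r ^ 2) * ∑ c, v c ^ 2 := by
    simp [vecMulVec_mul_vecMulVec, dotProduct, sq, Finset.mul_sum, mul_comm, mul_left_comm]
  calc kyFan k (vecMulVec u v) ≤ √(vecMulVec u v).rank * √((∑ r, u r ^ 2) * ∑ c, v c ^ 2) := by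
        rw [← htr]; exact kyFan_le_sqrt_rank_mul k _
    _ ≤ 1 * √((∑ r, u r ^ 2) * ∑ c, v c ^ 2) := by
        gcongr
        exact Real.sqrt_le_one.mpr (by exact_mod_cast rank_vecMulVec_le u v)
    _ = √(∑ r, u r ^ 2) * √(∑ c, v c ^ 2) := by
        rw [one_mul, Real.sqrt_mul (Finset.sum_nonneg fun r _ => sq_nonneg (u r))]

end KyFan

namespace Matrix

open scoped Kronecker

section PiKronecker

variable {ι κ R : Type*} [Fintype ι]

def piKronecker [CommMonoid R] (F : ι → Matrix κ κ R) : Matrix (ι → κ) (ι → κ) R :=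
  of fun v w => ∏ j, F j (v j) (w j)

lemma piKronecker_mul_piKronecker [DecidableEq ι] [Fintype κ] [CommSemiring R]
    (F G : ι → Matrix κ κ R) :
    piKronecker F * piKronecker G = piKronecker (fun j => F j * G j) := by
  ext v w
  simp only [piKronecker, mul_apply, of_apply, Fintype.prod_sum, Finset.prod_mul_distrib]

lemma trace_piKronecker [DecidableEq ι] [Fintype κ] [CommSemiring R] (F : ι → Matrix κ κ R) :
    (piKronecker F).trace = ∏ j, (F j).trace := by
  simp only [trace, diag, piKronecker, of_apply, Fintype.prod_sum]

lemma conjTranspose_piKronecker [CommMonoid R] [StarMul R] (F : ι → Matrix κ κ R) :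
    (piKronecker F)ᴴ = piKronecker (fun j => (F j)ᴴ) := by
  ext v w
  simp [piKronecker, star_prod]

lemma isHermitian_piKronecker [CommMonoid R] [StarMul R] {F : ι → Matrix κ κ R}
    (hF : ∀ j, (F j).IsHermitian) : (piKronecker F).IsHermitian := by
  rw [IsHermitian, conjTranspose_piKronecker]
  exact congrArg piKronecker (funext hF)

lemma trace_piKronecker_eq_zero [DecidableEq ι] [Nonempty ι] [Fintype κ] [CommSemiring R]
    {F : ι → Matrix κ κ R} (hF : ∀ j, (F j).trace = 0) : (piKronecker F).trace = 0 := by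
  rw [trace_piKronecker]
  exact Finset.prod_eq_zero (Finset.mem_univ (Classical.arbitrary ι)) (hF _)

lemma trace_piKronecker_mul_piKronecker_of_orthogonal {τ : Type*} [DecidableEq τ] [DecidableEq ι]
    [Fintype κ] [CommSemiring R] {B : τ → Matrix κ κ R} {c : R}
    (horth : ∀ s t, (B s * B t).trace = if s = t then c else 0) (a b : ι → τ) :
    ((piKronecker fun j => B (a j)) * piKronecker fun j => B (b j)).trace =
      if a = b then c ^ Fintype.card ι else 0 := by
  rw [piKronecker_mul_piKronecker, trace_piKronecker]
  split_ifs with hab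
  · simp [hab, horth]
  · obtain ⟨j, hj⟩ := Function.ne_iff.mp hab
    exact Finset.prod_eq_zero (Finset.mem_univ j) (by rw [horth, if_neg hj])

lemma piKronecker_eq_submatrix_kronecker [DecidableEq ι] [CommMonoid R] (A : Finset ι)
    (F : ι → Matrix κ κ R) :
    piKronecker F = (piKronecker (fun j : {j // j ∈ A} => F j) ⊗ₖ
      piKronecker (fun j : {j // j ∉ A} => F j)).submatrix
        (Equiv.piEquivPiSubtypeProd (· ∈ A) fun _ => κ)
        (Equiv.piEquivPiSubtypeProd (· ∈ A) fun _ => κ) := by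
  ext v w
  simp only [piKronecker, submatrix_apply, kroneckerMap_apply, of_apply,
    Equiv.piEquivPiSubtypeProd_apply]
  convert (Fintype.prod_subtype_mul_prod_subtype (· ∈ A) fun j => F j (v j) (w j)).symm

lemma trace_submatrix_equiv {m n : Type*} [Fintype m] [Fintype n] [AddCommMonoid R]
    (M : Matrix n n R) (e : m ≃ n) : (M.submatrix e e).trace = M.trace :=
  e.sum_comp M.diag

lemma trace_mul_piKronecker_of_apply_eq_mul [DecidableEq ι] [Fintype κ] [CommSemiring R]
    (A : Finset ι) {ρ : Matrix (ι → κ) (ι → κ) R}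
    {ρA : Matrix ({j // j ∈ A} → κ) ({j // j ∈ A} → κ) R}
    {ρB : Matrix ({j // j ∉ A} → κ) ({j // j ∉ A} → κ) R}
    (hρ : ∀ v w, ρ v w =
      ρA (fun j => v j.1) (fun j => w j.1) * ρB (fun j => v j.1) (fun j => w j.1))
    (F : ι → Matrix κ κ R) :
    (ρ * piKronecker F).trace = (ρA * piKronecker fun j : {j // j ∈ A} => F j).trace *
      (ρB * piKronecker fun j : {j // j ∉ A} => F j).trace := by
  have hρ' : ρ = (ρA ⊗ₖ ρB).submatrix (Equiv.piEquivPiSubtypeProd (· ∈ A) fun _ => κ)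
      (Equiv.piEquivPiSubtypeProd (· ∈ A) fun _ => κ) := by
    ext v w
    exact hρ v w
  rw [hρ', piKronecker_eq_submatrix_kronecker A F, submatrix_mul_equiv, trace_submatrix_equiv,
    ← mul_kronecker_mul, trace_kronecker]

end PiKronecker

section Trace

variable {κ : Type*} [Fintype κ]

lemma IsHermitian.im_trace_mul_eq_zero {A B : Matrix κ κ ℂ} (hA : A.IsHermitian)
    (hB : B.IsHermitian) : (A * B).trace.im = 0 := by
  rw [← Complex.conj_eq_iff_im, ← Complex.star_def, ← trace_conjTranspose, conjTranspose_mul,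
    hA.eq, hB.eq, trace_mul_comm]

lemma IsHermitian.trace_mul_self {𝕜 : Type*} [RCLike 𝕜] [DecidableEq κ] {A : Matrix κ κ 𝕜}
    (hA : A.IsHermitian) : (A * A).trace = ∑ i, (hA.eigenvalues i : 𝕜) ^ 2 := by
  conv_lhs => rw [hA.spectral_theorem, ← map_mul, Unitary.conjStarAlgAut_apply, trace_mul_cycle,
    Unitary.coe_star_mul_self, one_mul, diagonal_mul_diagonal, trace_diagonal]
  simp [sq]

lemma PosSemidef.re_trace_mul_self_le [DecidableEq κ] {A : Matrix κ κ ℂ} (hA : A.PosSemidef) :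
    (A * A).trace.re ≤ A.trace.re ^ 2 := by
  rw [hA.1.trace_mul_self, hA.1.trace_eq_sum_eigenvalues]
  simp only [Complex.re_sum, ← RCLike.ofReal_pow]
  exact Finset.sum_sq_le_sq_sum_of_nonneg fun i _ => hA.eigenvalues_nonneg i

end Trace

section HilbertSchmidt

variable {κ ι : Type*} [Fintype κ]

noncomputable def toEuclideanHS (A : Matrix κ κ ℂ) : EuclideanSpace ℂ (κ × κ) :=
  WithLp.toLp 2 fun p => A p.1 p.2

lemma inner_toEuclideanHS (A B : Matrix κ κ ℂ) :
    inner ℂ (toEuclideanHS A) (toEuclideanHS B) = (Aᴴ * B).trace := by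
  simp only [toEuclideanHS, PiLp.inner_apply, RCLike.inner_apply, Fintype.sum_prod_type,
    trace, diag, mul_apply, conjTranspose_apply]
  rw [Finset.sum_comm]
  simp [mul_comm]

lemma sum_norm_trace_conjTranspose_mul_sq_le [Fintype ι] [DecidableEq ι] {F : ι → Matrix κ κ ℂ}
    (hF : ∀ i j, ((F i)ᴴ * F j).trace = if i = j then 1 else 0) (σ : Matrix κ κ ℂ) :
    ∑ i, ‖((F i)ᴴ * σ).trace‖ ^ 2 ≤ (σᴴ * σ).trace.re := by
  have hON : Orthonormal ℂ (toEuclideanHS ∘ F) := by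
    rw [orthonormal_iff_ite]
    intro i j
    simp only [Function.comp_apply, inner_toEuclideanHS, hF]
  have := hON.sum_inner_products_le (toEuclideanHS σ) (s := Finset.univ)
  rw [← inner_self_eq_norm_sq (𝕜 := ℂ), inner_toEuclideanHS] at this
  simp only [Function.comp_apply, inner_toEuclideanHS] at this
  exact this

lemma norm_trace_sq_div_card_add_sum_le [DecidableEq κ] [Nonempty κ] [Fintype ι] [DecidableEq ι]
    {B : ι → Matrix κ κ ℂ} {c : ℝ} (hc : 0 < c) (hB : ∀ i, (B i).IsHermitian)
    (htr : ∀ i, (B i).trace = 0) (horth : ∀ i j, (B i * B j).trace = if i = j then (c : ℂ) else 0)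
    (σ : Matrix κ κ ℂ) :
    ‖σ.trace‖ ^ 2 / Fintype.card κ + ∑ i, ‖(B i * σ).trace‖ ^ 2 / c ≤ (σᴴ * σ).trace.re := by
  have hN : (0 : ℝ) < Fintype.card κ := by exact_mod_cast Fintype.card_pos
  have hnorm : ∀ {x : ℝ}, 0 < x → ((√x : ℂ))⁻¹ * (((√x : ℂ))⁻¹ * x) = 1 := fun hx => by
    rw [← mul_assoc, ← mul_inv, ← Complex.ofReal_mul, Real.mul_self_sqrt hx.le,
      inv_mul_cancel₀ (by exact_mod_cast hx.ne')]
  let F : Option ι → Matrix κ κ ℂ :=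
    fun o => o.elim ((√(Fintype.card κ : ℝ))⁻¹ • 1) fun i => (√c)⁻¹ • B i
  have hF : ∀ o o', ((F o)ᴴ * F o').trace = if o = o' then 1 else 0 := by
    rintro (_ | i) (_ | j) <;> simp [F, htr, horth, (hB _).eq]
    · simpa using hnorm hN
    · split_ifs <;> simp [hnorm hc]
  have hsq : ∀ x a : ℝ, 0 ≤ x → (|√x|⁻¹ * a) ^ 2 = a ^ 2 / x := fun x a hx => by
    rw [abs_of_nonneg (Real.sqrt_nonneg x), mul_pow, inv_pow, Real.sq_sqrt hx, inv_mul_eq_div]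
  have := sum_norm_trace_conjTranspose_mul_sq_le hF σ
  simpa [F, Fintype.sum_option, (hB _).eq, hsq _ _ hN.le, hsq _ _ hc.le] using this

end HilbertSchmidt

end Matrix

section CorrTensor

variable {ι κ τ : Type*} [Fintype ι] [DecidableEq ι] [Fintype κ]

/-- `corrFull` for a state on an arbitrary finite set of sites `ι`. -/
noncomputable def corrTensor (B : τ → Matrix κ κ ℂ) (σ : Matrix (ι → κ) (ι → κ) ℂ) (a : ι → τ) :
    ℝ :=
  (σ * piKronecker fun j => B (a j)).trace.re

lemma corrTensor_dite_eq_mul {B : τ → Matrix κ κ ℂ} (hB : ∀ s, (B s).IsHermitian)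
    (A : Finset ι) {ρ : Matrix (ι → κ) (ι → κ) ℂ}
    {ρA : Matrix ({j // j ∈ A} → κ) ({j // j ∈ A} → κ) ℂ}
    {ρB : Matrix ({j // j ∉ A} → κ) ({j // j ∉ A} → κ) ℂ} (hρA : ρA.IsHermitian)
    (hρ : ∀ v w, ρ v w =
      ρA (fun j => v j.1) (fun j => w j.1) * ρB (fun j => v j.1) (fun j => w j.1))
    (r : {j // j ∈ A} → τ) (c : {j // j ∉ A} → τ) :
    corrTensor B ρ (fun j => if h : j ∈ A then r ⟨j, h⟩ else c ⟨j, h⟩) =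
      corrTensor B ρA r * corrTensor B ρB c := by
  have hr : (fun j : {j // j ∈ A} => B (if h : ↑j ∈ A then r ⟨j, h⟩ else c ⟨j, h⟩)) =
      fun j => B (r j) := funext fun j => by rw [dif_pos j.2]
  have hc : (fun j : {j // j ∉ A} => B (if h : ↑j ∈ A then r ⟨j, h⟩ else c ⟨j, h⟩)) =
      fun j => B (c j) := funext fun j => by rw [dif_neg j.2]
  rw [corrTensor, trace_mul_piKronecker_of_apply_eq_mul A hρ, hr, hc, Complex.mul_re,
    hρA.im_trace_mul_eq_zero (isHermitian_piKronecker fun j => hB (r j)), zero_mul, sub_zero]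
  rfl

lemma sum_sq_corrTensor_le [DecidableEq κ] [Nonempty κ] [Fintype τ] [DecidableEq τ] [Nonempty ι]
    {B : τ → Matrix κ κ ℂ} {c : ℝ} (hc : 0 < c) (hB : ∀ s, (B s).IsHermitian)
    (htr : ∀ s, (B s).trace = 0) (horth : ∀ s t, (B s * B t).trace = if s = t then (c : ℂ) else 0)
    {σ : Matrix (ι → κ) (ι → κ) ℂ} (hσ : σ.PosSemidef) (htrσ : σ.trace = 1) :
    ∑ a, corrTensor B σ a ^ 2 ≤ c ^ Fintype.card ι * (Fintype.card κ ^ Fintype.card ι - 1) /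
      Fintype.card κ ^ Fintype.card ι := by
  set K := fun a : ι → τ => piKronecker fun j => B (a j)
  have hK : ∀ a, (K a).IsHermitian := fun a => isHermitian_piKronecker fun j => hB _
  have hnorm : ∀ a, ‖(K a * σ).trace‖ ^ 2 = corrTensor B σ a ^ 2 := fun a => by
    rw [corrTensor, trace_mul_comm, Complex.sq_norm, Complex.normSq_apply,
      hσ.1.im_trace_mul_eq_zero (hK a)]
    ring
  have hC : 0 < c ^ Fintype.card ι := pow_pos hc _
  have hN : (0 : ℝ) < Fintype.card κ ^ Fintype.card ι := by positivity
  have hbessel := norm_trace_sq_div_card_add_sum_le hC hK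
    (fun a => trace_piKronecker_eq_zero fun j => htr _)
    (by simpa using trace_piKronecker_mul_piKronecker_of_orthogonal horth) σ
  rw [hσ.1.eq, htrσ, norm_one, Fintype.card_fun] at hbessel
  simp only [hnorm, ← Finset.sum_div, one_pow, Nat.cast_pow] at hbessel
  have hσσ : (σ * σ).trace.re ≤ 1 := by simpa [htrσ] using hσ.re_trace_mul_self_le
  have h := hbessel.trans hσσ
  rw [div_add_div _ _ hN.ne' hC.ne', div_le_one (mul_pos hN hC)] at h
  rw [le_div_iff₀ hN]
  linarith

end CorrTensor

lemma pow_mul_pow_sub_one_div_pow_mul (x y : ℝ) (a b : ℕ) :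
    x ^ a * (y ^ a - 1) / y ^ a * (x ^ b * (y ^ b - 1) / y ^ b) =
      x ^ (a + b) * (y ^ a - 1) * (y ^ b - 1) / y ^ (a + b) := by
  rw [pow_add, pow_add]
  ring

theorem kyFan_T_bipartition_of_sep_general (d : ℕ) (hd : 2 ≤ d)
    (lam : Fin (d ^ 2 - 1) → Matrix (Fin d) (Fin d) ℂ)
    (hherm : ∀ i, (lam i).IsHermitian)
    (htr : ∀ i, (lam i).trace = 0)
    (horth : ∀ i j, (lam i * lam j).trace = if i = j then 2 else 0)
    (n : ℕ)
    (A : Finset (Fin n)) (hA1 : A.Nonempty) (hA2 : A ≠ Finset.univ)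
    (ρ : Matrix (Fin n → Fin d) (Fin n → Fin d) ℂ)
    (hsep : SepUnder ρ A)
    (k : ℕ) :
    kyFan k (Matrix.of fun (r : {j // j ∈ A} → Fin (d ^ 2 - 1))
        (c : {j // j ∉ A} → Fin (d ^ 2 - 1)) =>
        corrFull lam ρ (fun j => if h : j ∈ A then r ⟨j, h⟩ else c ⟨j, h⟩))
      ≤ Real.sqrt (2 ^ n * ((d : ℝ) ^ A.card - 1) * ((d : ℝ) ^ (n - A.card) - 1)
          / (d : ℝ) ^ n) := by
  obtain ⟨ρA, ρB, hρA, htrA, hρB, htrB, hρ⟩ := hsep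
  have : Nonempty (Fin d) := ⟨⟨0, by omega⟩⟩
  have : Nonempty {j // j ∈ A} := hA1.to_subtype
  have : Nonempty {j // j ∉ A} := by simpa [nonempty_subtype, Finset.eq_univ_iff_forall] using hA2
  have horth' : ∀ i j, (lam i * lam j).trace = if i = j then ((2 : ℝ) : ℂ) else 0 := by
    simpa using horth
  have bA := sum_sq_corrTensor_le two_pos hherm htr horth' hρA htrA
  have bB := sum_sq_corrTensor_le two_pos hherm htr horth' hρB htrB
  rw [Fintype.card_coe] at bA
  rw [Fintype.card_subtype_compl, Fintype.card_coe] at bB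
  simp only [Fintype.card_fin] at bA bB
  have hn : n = A.card + (n - A.card) := (Nat.add_sub_of_le (by simpa using A.card_le_univ)).symm
  calc _ = kyFan k (vecMulVec (corrTensor lam ρA) (corrTensor lam ρB)) :=
        congrArg (kyFan k) (ext fun r c => corrTensor_dite_eq_mul hherm A hρA.1 hρ r c)
    _ ≤ _ := kyFan_vecMulVec_le k _ _
    _ ≤ √(2 ^ A.card * ((d : ℝ) ^ A.card - 1) / (d : ℝ) ^ A.card) *
          √(2 ^ (n - A.card) * ((d : ℝ) ^ (n - A.card) - 1) / (d : ℝ) ^ (n - A.card)) := by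
        gcongr
    _ = _ := by
        rw [← Real.sqrt_mul (le_trans (by positivity) bA), pow_mul_pow_sub_one_div_pow_mul, ← hn]

/-- (Theorem 3) If a pure `n`-partite state is separable under the bipartition `A₁|A₂`,
then `‖T_{A₁|A₂}‖_k ≤ √(2ⁿ(d^{n_{A₁}}-1)(d^{n_{A₂}}-1)/dⁿ)` for every `k = 1,…,d²-1`. -/
theorem kyFan_T_bipartition_of_sep (d : ℕ) (hd : 2 ≤ d)
    (lam : Fin (d ^ 2 - 1) → Matrix (Fin d) (Fin d) ℂ)
    (hherm : ∀ i, (lam i).IsHermitian)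
    (htr : ∀ i, (lam i).trace = 0)
    (horth : ∀ i j, (lam i * lam j).trace = if i = j then 2 else 0)
    (n : ℕ) (hn : 2 ≤ n)
    (A : Finset (Fin n)) (hA1 : A.Nonempty) (hA2 : A ≠ Finset.univ)
    (ρ : Matrix (Fin n → Fin d) (Fin n → Fin d) ℂ)
    (hpsd : ρ.PosSemidef) (htrρ : ρ.trace = 1) (hpure : ρ * ρ = ρ)
    (hsep : SepUnder ρ A)
    (k : ℕ) (hk1 : 1 ≤ k) (hk2 : k ≤ d ^ 2 - 1) :
    kyFan k (Matrix.of fun (r : {j // j ∈ A} → Fin (d ^ 2 - 1))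
        (c : {j // j ∉ A} → Fin (d ^ 2 - 1)) =>
        corrFull lam ρ (fun j => if h : j ∈ A then r ⟨j, h⟩ else c ⟨j, h⟩))
      ≤ Real.sqrt (2 ^ n * ((d : ℝ) ^ A.card - 1) * ((d : ℝ) ^ (n - A.card) - 1)
          / (d : ℝ) ^ n) :=
  kyFan_T_bipartition_of_sep_general d hd lam hherm htr horth n A hA1 hA2 ρ hsep k
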